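/- arXiv:2504.12692 — 2 statements merged into one kernel-verified Lean document; each statement's English description precedes it below -/
import Mathlib

section
/- Let q be a prime and let Kl(z,q) = S(z,1;q)/√q denote the normalized Kloosterman sum. Then Σ_{b mod q} Σ_{c mod q, gcd(c,q)=1} |Σ_{m=1}^{M} α_m Kl(b + mc, q)|² ≤ q(q−1)·M·max_m |α_m|² + q·M²·(Σ_m |α_m|)², for any complex coefficients α_m. In particular, when |α_m| ≤ 1 for all m, the left side is O(q²M + qM⁴); in fact the orthogonality of Kloosterman sums yields the bound Σ_{b,c} |Σ_m α_m Kl(b+mc,q)|² ≪ q² M when |α_m| ≤ 1, using that Σ_{z mod q} Kl(z,q) Kl(z+t,q) equals q·1_{t≡0} + O(q^{1/2}) error terms bounded via Weil. -/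
open Finset Real

/-- The normalized Kloosterman sum `Kl(z,q) = S(z,1;q)/√q`. -/
noncomputable def Kl (q : ℕ) [NeZero q] (z : ZMod q) : ℂ :=
  (∑ x : (ZMod q)ˣ,
      Complex.exp (2 * Real.pi * Complex.I *
        (((z * (x : ZMod q) + ((x⁻¹ : (ZMod q)ˣ) : ZMod q)).val : ℂ) / q)))
    / Real.sqrt q

/-!
Opening the Kloosterman sums, `Σ_m α_m Kl(b + mc, q)` is `q^{-1/2}` times a Fourier series in `b`
with coefficient `e(x̄/q) A(cx)` at each frequency `x ∈ (ℤ/q)ˣ`, where `A(u) = Σ_{m ≤ M} α_m e(mu/q)`.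
Parseval in `b` turns the sum over `b` into `Σ_x |A(cx)|²`, which does not depend on `c`. Parseval
once more, now in `u`, gives `Σ_u |A(u)|² = q Σ_m |α_m|² ≤ qM`, because `m ↦ m mod q` is injective
on `[1, M]` when `M < q`. Hence the left side is at most `φ(q) · qM ≤ q²M`.
-/

open ComplexConjugate

theorem AddChar.sum_norm_sq_sum_mul_apply_mul {R ι : Type*} [CommRing R] [Fintype R]
    {ψ : AddChar R ℂ} (hψ : ψ.IsPrimitive) (s : Finset ι) (f : ι → ℂ) (g : ι → R)
    (hg : Set.InjOn g s) :
    ∑ b, ‖∑ x ∈ s, f x * ψ (g x * b)‖ ^ 2 = Fintype.card R * ∑ x ∈ s, ‖f x‖ ^ 2 := by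
  classical
  apply Complex.ofReal_injective
  push_cast
  simp_rw [← Complex.mul_conj', map_sum, map_mul, ← AddChar.map_neg_eq_conj, sum_mul_sum]
  calc ∑ b, ∑ x ∈ s, ∑ y ∈ s, f x * ψ (g x * b) * (conj (f y) * ψ (-(g y * b)))
      = ∑ x ∈ s, ∑ y ∈ s, f x * conj (f y) * ∑ b, ψ (b * (g x - g y)) := by
        rw [sum_comm]
        refine sum_congr rfl fun x _ => ?_
        rw [sum_comm]
        refine sum_congr rfl fun y _ => ?_
        rw [mul_sum]
        refine sum_congr rfl fun b _ => ?_
        rw [mul_comm b, sub_mul, sub_eq_add_neg, AddChar.map_add_eq_mul]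
        ring
    _ = ∑ x ∈ s, f x * conj (f x) * Fintype.card R := by
        -- orthogonality of `b ↦ ψ (b * t)` leaves only `g y = g x`, i.e. the diagonal `y = x`
        refine sum_congr rfl fun x hx => ?_
        simp_rw [AddChar.sum_mulShift _ hψ, sub_eq_zero]
        refine (sum_eq_single_of_mem x hx fun y hy hyx => ?_).trans (by rw [if_pos rfl])
        rw [if_neg fun h => hyx (hg hy hx h.symm), Nat.cast_zero, mul_zero]
    _ = _ := by rw [mul_sum]; exact sum_congr rfl fun x _ => by ring

noncomputable def expSum (q M : ℕ) [NeZero q] (α : ℕ → ℂ) (u : ZMod q) : ℂ :=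
  ∑ m ∈ Icc 1 M, α m * ZMod.stdAddChar ((m : ZMod q) * u)

theorem sum_norm_sq_expSum {q : ℕ} [NeZero q] {M : ℕ} (hM : M < q) (α : ℕ → ℂ) :
    ∑ u : ZMod q, ‖expSum q M α u‖ ^ 2 = q * ∑ m ∈ Icc 1 M, ‖α m‖ ^ 2 := by
  have hinj : Set.InjOn (fun m : ℕ => (m : ZMod q)) (Icc 1 M) := by
    intro m hm n hn h
    simp only [coe_Icc, Set.mem_Icc] at hm hn
    simpa [ZMod.val_natCast_of_lt (hm.2.trans_lt hM), ZMod.val_natCast_of_lt (hn.2.trans_lt hM)]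
      using congrArg ZMod.val h
  simpa only [expSum, ZMod.card] using
    AddChar.sum_norm_sq_sum_mul_apply_mul (ZMod.isPrimitive_stdAddChar q) _ α _ hinj

namespace Kl

variable {q : ℕ} [NeZero q]

local notation "ψ" => (ZMod.stdAddChar : AddChar (ZMod q) ℂ)

theorem eq_sum_stdAddChar (z : ZMod q) :
    Kl q z = (∑ x : (ZMod q)ˣ, ψ ((x⁻¹ : (ZMod q)ˣ) : ZMod q) * ψ (x * z)) / (√q : ℂ) := by
  unfold Kl
  congr 1
  refine sum_congr rfl fun x _ => ?_
  rw [← AddChar.map_add_eq_mul, ZMod.stdAddChar_apply, ZMod.toCircle_apply, mul_div_assoc,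
    add_comm, mul_comm (x : ZMod q) z]

theorem sum_mul_Kl_add_mul (M : ℕ) (α : ℕ → ℂ) (b : ZMod q) (c : (ZMod q)ˣ) :
    ∑ m ∈ Icc 1 M, α m * Kl q (b + m * c)
      = (∑ x : (ZMod q)ˣ, ψ ((x⁻¹ : (ZMod q)ˣ) : ZMod q) * expSum q M α (c * x) * ψ (x * b))
        / (√q : ℂ) := by
  simp only [eq_sum_stdAddChar, ← mul_div_assoc, ← sum_div, expSum, mul_sum, sum_mul]
  rw [sum_comm]
  refine congrArg (· / _) (sum_congr rfl fun x _ => sum_congr rfl fun m _ => ?_)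
  rw [mul_add, AddChar.map_add_eq_mul, mul_left_comm (x : ZMod q),
    mul_comm (x : ZMod q) (c : ZMod q)]
  ring

theorem sum_norm_sq_sum_mul_Kl_add_mul (M : ℕ) (α : ℕ → ℂ) (c : (ZMod q)ˣ) :
    ∑ b : ZMod q, ‖∑ m ∈ Icc 1 M, α m * Kl q (b + m * c)‖ ^ 2
      = ∑ x : (ZMod q)ˣ, ‖expSum q M α (c * x)‖ ^ 2 := by
  have hq : (q : ℝ) ≠ 0 := NeZero.ne _
  simp only [sum_mul_Kl_add_mul, norm_div, div_pow, Complex.norm_real, norm_eq_abs, sq_abs,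
    sq_sqrt (Nat.cast_nonneg q), ← sum_div]
  rw [AddChar.sum_norm_sq_sum_mul_apply_mul (ZMod.isPrimitive_stdAddChar q) univ _ _
    Units.val_injective.injOn, ZMod.card, mul_div_cancel_left₀ _ hq]
  simp only [norm_mul, AddChar.norm_apply, one_mul]

theorem sum_sum_norm_sq_sum_mul_Kl_add_mul (M : ℕ) (α : ℕ → ℂ) :
    ∑ b : ZMod q, ∑ c : (ZMod q)ˣ, ‖∑ m ∈ Icc 1 M, α m * Kl q (b + m * c)‖ ^ 2
      = Fintype.card (ZMod q)ˣ * ∑ x : (ZMod q)ˣ, ‖expSum q M α x‖ ^ 2 := by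
  rw [sum_comm, ← nsmul_eq_mul, ← card_univ, ← sum_const]
  refine sum_congr rfl fun c _ => ?_
  rw [sum_norm_sq_sum_mul_Kl_add_mul]
  exact Fintype.sum_equiv (Equiv.mulLeft c) _ _ fun x => by simp

end Kl

theorem Fintype.sum_units_val_le_sum {M : Type*} [Monoid M] [Fintype M] [Fintype Mˣ]
    (f : M → ℝ) (hf : ∀ u, 0 ≤ f u) : ∑ x : Mˣ, f x ≤ ∑ u, f u := by
  calc ∑ x : Mˣ, f x = ∑ u ∈ univ.map ⟨_, Units.val_injective⟩, f u := by rw [sum_map]; rfl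
    _ ≤ ∑ u, f u := sum_le_sum_of_subset_of_nonneg (subset_univ _) fun u _ _ => hf u

/-- Second moment (ν = 1 case of Lemma 3.2): for prime `q`, `1 ≤ M < q` and
coefficients with `|α_m| ≤ 1`,
`Σ_{b mod q} Σ_{(c,q)=1} |Σ_{m ≤ M} α_m Kl(b+mc,q)|² ≪ q² M`. -/
theorem stmt_3 :
    ∃ C : ℝ, 0 < C ∧
      ∀ (q : ℕ) [NeZero q], q.Prime →
        ∀ M : ℕ, 1 ≤ M → M < q →
          ∀ α : ℕ → ℂ, (∀ m, ‖α m‖ ≤ 1) →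
            ∑ b : ZMod q, ∑ c : (ZMod q)ˣ,
                ‖∑ m ∈ Finset.Icc 1 M, α m * Kl q (b + (m : ZMod q) * (c : ZMod q))‖ ^ 2
              ≤ C * ((q : ℝ) ^ 2 * M) := by
  refine ⟨1, one_pos, fun q _ _ M _ hM α hα => ?_⟩
  have hunits : (Fintype.card (ZMod q)ˣ : ℝ) ≤ q := by
    exact_mod_cast (ZMod.card_units_eq_totient q).trans_le (Nat.totient_le q)
  have hα2 : ∑ m ∈ Icc 1 M, ‖α m‖ ^ 2 ≤ M := by
    simpa using sum_le_card_nsmul (Icc 1 M) (fun m => ‖α m‖ ^ 2) 1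
      fun m _ => pow_le_one₀ (norm_nonneg _) (hα m)
  rw [Kl.sum_sum_norm_sq_sum_mul_Kl_add_mul, one_mul]
  calc _ ≤ (q : ℝ) * ∑ u, ‖expSum q M α u‖ ^ 2 :=
        mul_le_mul hunits (Fintype.sum_units_val_le_sum _ fun _ => by positivity)
          (by positivity) (by positivity)
    _ = q * (q * ∑ m ∈ Icc 1 M, ‖α m‖ ^ 2) := by rw [sum_norm_sq_expSum hM]
    _ ≤ q ^ 2 * M := by rw [← mul_assoc, ← sq]; gcongr
end

section
/- Let K ≥ 1, E ≥ 1 be reals, N ≥ E, H ≥ 1. The number of triples (h₁, h₂, k) of integers with 0 < |h₁|, |h₂| ≤ 2H, 1 ≤ |k| ≤ K, and k(h₁n₂ − h₂n₁) = ℓ for a fixed nonzero integer ℓ and fixed coprime n₁, n₂ ∼ N/E, is ≪_ε |ℓ|^ε · (1 + EH/N). -/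
/-!
Since `k ∣ ℓ`, there are at most `2 d(|ℓ|) ≪_ε |ℓ|^ε` choices of `k`. For each of them
`(h₁, h₂)` lies on the line `h₁ n₂ − h₂ n₁ = ℓ / k`: there `h₂` determines `h₁`, and by
coprimality all admissible `h₂` are congruent mod `n₂`, so there are at most
`4H / n₂ + 1 ≪ 1 + EH/N` of them. The divisor bound `d(n) ≪_ε n^ε` compares each factor
`a + 1` of `d(n)` with `p^{aε}`: for `p ≥ 2^{1/ε}` no constant is needed, and each of the
finitely many smaller primes costs a factor `1 + 2/ε`.
-/

open Finset

lemma add_one_le_mul_rpow_of_two_le {ε x : ℝ} (hε : 0 < ε) (hx : 2 ≤ x) (a : ℕ) :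
    (a + 1 : ℝ) ≤ (1 + 2 / ε) * x ^ (a * ε) := by
  have hlog : 1 / 2 < Real.log 2 := by linarith [Real.log_two_gt_d9]
  have hpow : 1 + a * ε / 2 ≤ x ^ (a * ε) := calc
    1 + a * ε / 2 ≤ Real.log 2 * (a * ε) + 1 := by nlinarith [mul_nonneg a.cast_nonneg hε.le]
    _ ≤ Real.exp (Real.log 2 * (a * ε)) := Real.add_one_le_exp _
    _ = 2 ^ (a * ε) := by rw [Real.rpow_def_of_pos two_pos]
    _ ≤ x ^ (a * ε) := by gcongr
  calc (a + 1 : ℝ) ≤ (1 + 2 / ε) * (1 + a * ε / 2) := by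
        field_simp
        nlinarith [mul_nonneg a.cast_nonneg hε.le]
    _ ≤ (1 + 2 / ε) * x ^ (a * ε) := by gcongr

lemma add_one_le_rpow_of_two_rpow_inv_le {ε x : ℝ} (hε : 0 < ε) (hx : 2 ^ ε⁻¹ ≤ x) (a : ℕ) :
    (a + 1 : ℝ) ≤ x ^ (a * ε) := calc
  (a + 1 : ℝ) ≤ 2 ^ a := by exact_mod_cast a.lt_two_pow_self
  _ = (2 ^ ε⁻¹) ^ (a * ε) := by
    rw [← Real.rpow_mul zero_le_two, mul_comm (a : ℝ), inv_mul_cancel_left₀ hε.ne',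
      Real.rpow_natCast]
  _ ≤ x ^ (a * ε) := by gcongr

theorem Nat.rpow_eq_prod_primeFactors {n : ℕ} (hn : n ≠ 0) (s : ℝ) :
    (n : ℝ) ^ s = ∏ p ∈ n.primeFactors, (p : ℝ) ^ (n.factorization p * s) := by
  conv_lhs => rw [← Nat.prod_factorization_pow_eq_self hn]
  rw [Nat.prod_factorization_eq_prod_primeFactors, Nat.cast_prod,
    ← Real.finsetProd_rpow _ _ fun p _ ↦ by positivity]
  refine prod_congr rfl fun p _ ↦ ?_
  rw [Nat.cast_pow, ← Real.rpow_natCast, ← Real.rpow_mul p.cast_nonneg]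

theorem Nat.exists_card_divisors_le_mul_rpow {ε : ℝ} (hε : 0 < ε) :
    ∃ C > 0, ∀ n : ℕ, n ≠ 0 → (#n.divisors : ℝ) ≤ C * (n : ℝ) ^ ε := by
  set B := ⌈(2 : ℝ) ^ ε⁻¹⌉₊
  refine ⟨(1 + 2 / ε) ^ (B + 1), by positivity, fun n hn ↦ ?_⟩
  let c : ℕ → ℝ := fun p ↦ if p ≤ B then 1 + 2 / ε else 1
  have hfactor : ∀ p ∈ n.primeFactors,
      (n.factorization p + 1 : ℝ) ≤ c p * (p : ℝ) ^ (n.factorization p * ε) := by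
    intro p hp
    by_cases hpB : p ≤ B
    · simpa [c, hpB] using add_one_le_mul_rpow_of_two_le hε
        (by exact_mod_cast (Nat.prime_of_mem_primeFactors hp).two_le) _
    · simpa [c, hpB] using add_one_le_rpow_of_two_rpow_inv_le hε
        ((Nat.le_ceil _).trans (by exact_mod_cast (not_le.mp hpB).le)) _
  have hc : ∏ p ∈ n.primeFactors, c p ≤ (1 + 2 / ε) ^ (B + 1) := by
    rw [prod_ite, prod_const, prod_const_one, mul_one]
    refine pow_le_pow_right₀ (le_add_of_nonneg_right (by positivity)) ?_
    exact (card_le_card fun p hp ↦ mem_range.mpr (Nat.lt_succ_of_le (mem_filter.mp hp).2)).trans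
      (card_range _).le
  calc (#n.divisors : ℝ) = ∏ p ∈ n.primeFactors, (n.factorization p + 1 : ℝ) := by
        rw [Nat.card_divisors hn]; push_cast; rfl
    _ ≤ ∏ p ∈ n.primeFactors, c p * (p : ℝ) ^ (n.factorization p * ε) :=
        prod_le_prod (fun _ _ ↦ by positivity) hfactor
    _ = (∏ p ∈ n.primeFactors, c p) * (n : ℝ) ^ ε := by
        rw [prod_mul_distrib, Nat.rpow_eq_prod_primeFactors hn]
    _ ≤ (1 + 2 / ε) ^ (B + 1) * (n : ℝ) ^ ε := by gcongr

theorem Int.card_divisors (z : ℤ) : #z.divisors = 2 * #z.natAbs.divisors := by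
  rw [Int.divisors, card_disjUnion, card_map, card_map, two_mul]

theorem Int.exists_card_divisors_le_mul_rpow {ε : ℝ} (hε : 0 < ε) :
    ∃ C > 0, ∀ z : ℤ, z ≠ 0 → (#z.divisors : ℝ) ≤ C * (z.natAbs : ℝ) ^ ε := by
  obtain ⟨C, hC, hdiv⟩ := Nat.exists_card_divisors_le_mul_rpow hε
  refine ⟨2 * C, by positivity, fun z hz ↦ ?_⟩
  rw [Int.card_divisors, Nat.cast_mul, Nat.cast_two, mul_assoc]
  gcongr
  exact hdiv _ (Int.natAbs_ne_zero.mpr hz)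

theorem Int.card_le_of_forall_dvd_sub {S : Finset ℤ} {a b d : ℤ} (hab : a ≤ b) (hd : 0 < d)
    (hS : S ⊆ Icc a b) (hdvd : ∀ x ∈ S, ∀ y ∈ S, d ∣ x - y) :
    (#S : ℝ) ≤ (b - a) / d + 1 := by
  rcases S.eq_empty_or_nonempty with rfl | hne
  · have : (0 : ℝ) ≤ (b - a) / d := div_nonneg (by simpa) (by positivity)
    simp only [card_empty, Nat.cast_zero]
    linarith
  set x₀ := S.min' hne
  have hx₀ : x₀ ∈ S := S.min'_mem hne
  have hcard : #S ≤ #(Icc 0 ((b - a) / d)) := by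
    refine card_le_card_of_injOn (fun x ↦ (x - x₀) / d) (fun x hx ↦ ?_) (fun x hx y hy hxy ↦ ?_)
    · have := mem_Icc.mp (hS hx)
      have := mem_Icc.mp (hS hx₀)
      have := S.min'_le x hx
      exact mem_Icc.mpr ⟨Int.ediv_nonneg (by omega) hd.le, Int.ediv_le_ediv hd (by omega)⟩
    · have := Int.ediv_mul_cancel (hdvd x hx x₀ hx₀)
      have := Int.ediv_mul_cancel (hdvd y hy x₀ hx₀)
      simp only at hxy
      grind
  have hcardℤ : (#S : ℤ) ≤ (b - a) / d + 1 := by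
    have := Int.ediv_nonneg (sub_nonneg.mpr hab) hd.le
    have := Int.card_Icc_of_le (a := 0) (b := (b - a) / d) (by omega)
    omega
  have hcardℝ : (#S : ℝ) ≤ ((b - a) / d : ℤ) + 1 := by exact_mod_cast hcardℤ
  have hq : (((b - a) / d : ℤ) : ℝ) * d ≤ b - a := by exact_mod_cast Int.ediv_mul_le _ hd.ne'
  rw [← le_div_iff₀ (by exact_mod_cast hd)] at hq
  linarith

theorem card_le_of_forall_linear_eq {P : Finset (ℤ × ℤ)} {n₁ n₂ v a b : ℤ}
    (hcop : IsCoprime n₁ n₂) (hn₂ : 0 < n₂) (hab : a ≤ b)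
    (hP : ∀ h ∈ P, h.2 ∈ Icc a b ∧ h.1 * n₂ - h.2 * n₁ = v) :
    (#P : ℝ) ≤ (b - a) / n₂ + 1 := by
  have hdiff : ∀ h ∈ P, ∀ h' ∈ P, (h.1 - h'.1) * n₂ = (h.2 - h'.2) * n₁ := fun h hh h' hh' ↦ by
    linear_combination (hP h hh).2 - (hP h' hh').2
  have hinj : Set.InjOn Prod.snd (P : Set (ℤ × ℤ)) := fun h hh h' hh' heq ↦ by
    have := hdiff h hh h' hh'
    rw [heq, sub_self, zero_mul, mul_eq_zero, sub_eq_zero] at this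
    exact Prod.ext (this.resolve_right hn₂.ne') heq
  rw [← card_image_of_injOn hinj]
  refine Int.card_le_of_forall_dvd_sub hab hn₂ (fun y hy ↦ ?_) fun y hy y' hy' ↦ ?_
  · obtain ⟨h, hh, rfl⟩ := mem_image.mp hy
    exact (hP h hh).1
  · obtain ⟨h, hh, rfl⟩ := mem_image.mp hy
    obtain ⟨h', hh', rfl⟩ := mem_image.mp hy'
    exact hcop.symm.dvd_of_dvd_mul_right ⟨h.1 - h'.1, by rw [← hdiff h hh h' hh', mul_comm]⟩

theorem card_le_of_forall_mul_linear_eq {A : Finset ((ℤ × ℤ) × ℤ)} {n₁ n₂ ℓ a b : ℤ}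
    (hcop : IsCoprime n₁ n₂) (hn₂ : 0 < n₂) (hab : a ≤ b) (hℓ : ℓ ≠ 0)
    (hA : ∀ p ∈ A, p.1.2 ∈ Icc a b ∧ p.2 * (p.1.1 * n₂ - p.1.2 * n₁) = ℓ) :
    (#A : ℝ) ≤ #ℓ.divisors * ((b - a) / n₂ + 1) := by
  have hk : ∀ p ∈ A, p.2 ∈ ℓ.divisors := fun p hp ↦
    Int.mem_divisors.mpr ⟨⟨_, (hA p hp).2.symm⟩, hℓ⟩
  have hfiber : ∀ k ∈ ℓ.divisors, (#{p ∈ A | p.2 = k} : ℝ) ≤ (b - a) / n₂ + 1 := by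
    intro k hk
    have hk0 : k ≠ 0 := by rintro rfl; simp at hk
    have hinj : Set.InjOn Prod.fst (A.filter (·.2 = k) : Set ((ℤ × ℤ) × ℤ)) :=
      fun p hp p' hp' heq ↦ by
        rw [mem_coe, mem_filter] at hp hp'
        exact Prod.ext heq (hp.2.trans hp'.2.symm)
    rw [← card_image_of_injOn hinj]
    refine card_le_of_forall_linear_eq (v := ℓ / k) hcop hn₂ hab fun h hh ↦ ?_
    obtain ⟨p, hp, rfl⟩ := mem_image.mp hh
    obtain ⟨hpA, rfl⟩ := mem_filter.mp hp
    exact ⟨(hA p hpA).1, Int.eq_ediv_of_mul_eq_right hk0 (hA p hpA).2⟩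
  rw [card_eq_sum_card_fiberwise hk, Nat.cast_sum]
  exact (sum_le_card_nsmul _ _ _ hfiber).trans_eq (nsmul_eq_mul _ _)

/-- For fixed coprime `n₁, n₂ ∼ N/E` and a fixed nonzero integer `ℓ`, the number of
triples `(h₁,h₂,k)` with `0 < |h₁|,|h₂| ≤ 2H`, `1 ≤ |k| ≤ K` and
`k(h₁n₂ − h₂n₁) = ℓ` is `≪_ε |ℓ|^ε (1 + EH/N)`. -/
theorem stmt_13 :
    ∀ ε : ℝ, 0 < ε → ∃ C : ℝ, 0 < C ∧
      ∀ (K E N H : ℝ), 1 ≤ K → 1 ≤ E → E ≤ N → 1 ≤ H →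
        ∀ (ℓ : ℤ), ℓ ≠ 0 →
          ∀ (n₁ n₂ : ℤ), IsCoprime n₁ n₂ →
            N / E < (n₁ : ℝ) → (n₁ : ℝ) ≤ 2 * N / E →
            N / E < (n₂ : ℝ) → (n₂ : ℝ) ≤ 2 * N / E →
            ((((Finset.Icc (-⌊2 * H⌋) ⌊2 * H⌋ ×ˢ Finset.Icc (-⌊2 * H⌋) ⌊2 * H⌋) ×ˢ
                  Finset.Icc (-⌊K⌋) ⌊K⌋).filter
                (fun p : (ℤ × ℤ) × ℤ =>
                  p.1.1 ≠ 0 ∧ p.1.2 ≠ 0 ∧ p.2 ≠ 0 ∧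
                    p.2 * (p.1.1 * n₂ - p.1.2 * n₁) = ℓ)).card : ℝ)
              ≤ C * (ℓ.natAbs : ℝ) ^ ε * (1 + E * H / N) := by
  intro ε hε
  obtain ⟨C, hC, hdiv⟩ := Int.exists_card_divisors_le_mul_rpow hε
  refine ⟨4 * C, by positivity, fun K E N H _ hE hEN hH ℓ hℓ n₁ n₂ hcop _ _ hn₂ _ ↦ ?_⟩
  set M := ⌊2 * H⌋
  have hM : 0 ≤ M := Int.floor_nonneg.mpr (by linarith)
  have hNE : 0 < N / E := div_pos (by linarith) (by linarith)
  have hn₂pos : (0 : ℝ) < n₂ := hNE.trans hn₂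
  have hwidth : 0 ≤ (M : ℝ) - (-M : ℤ) ∧ (M : ℝ) - (-M : ℤ) ≤ 4 * H := by
    have : (0 : ℝ) ≤ M := by exact_mod_cast hM
    push_cast
    constructor <;> linarith [Int.floor_le (2 * H)]
  have hline : ((M : ℝ) - (-M : ℤ)) / n₂ + 1 ≤ 4 * (1 + E * H / N) := calc
    ((M : ℝ) - (-M : ℤ)) / n₂ + 1 ≤ 4 * H / (N / E) + 1 := by
        gcongr
        exact hwidth.2
    _ ≤ 4 * (1 + E * H / N) := by
        rw [div_div_eq_mul_div]
        linarith [show 4 * H * E / N = 4 * (E * H / N) by ring]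
  calc _ ≤ (#ℓ.divisors : ℝ) * (((M : ℝ) - (-M : ℤ)) / n₂ + 1) := by
        apply card_le_of_forall_mul_linear_eq hcop (Int.cast_pos.mp hn₂pos) (neg_le_self hM) hℓ
        intro p hp
        simp only [mem_filter, mem_product] at hp
        exact ⟨hp.1.1.2, hp.2.2.2.2⟩
    _ ≤ C * (ℓ.natAbs : ℝ) ^ ε * (4 * (1 + E * H / N)) :=
        mul_le_mul (hdiv ℓ hℓ) hline (add_nonneg (div_nonneg hwidth.1 hn₂pos.le) zero_le_one)
          (by positivity)
    _ = 4 * C * (ℓ.natAbs : ℝ) ^ ε * (1 + E * H / N) := by ring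
end
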